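/- Let K be an abstract simplicial complex on [m]. The ℤ-linear map η : ⊕_{ω⊆[m]} C̃^*(K_ω) → C^*((D^1,S^0)^K) sending the dual simplex σ*_ω ∈ C̃^*(K_ω) to the word u^σ t^{ω∖σ} is a bijective cochain map that raises degrees by one; that is, η is an isomorphism of cochain complexes after shifting degrees up by one. -/

import Mathlib

structure ASC (m : ℕ) where
  faces : Set (Finset (Fin m))
  empty_mem : ∅ ∈ faces
  down_closed : ∀ {σ τ : Finset (Fin m)}, σ ∈ faces → τ ⊆ σ → τ ∈ faces

def csg {m : ℕ} (i : Fin m) (σ : Finset (Fin m)) : ℤ :=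
  (-1) ^ (σ.filter (fun j => j < i)).card

variable {m : ℕ}

/-- Index of the cellular basis words `u^σ t^τ`. -/
def DSIdx (K : ASC m) : Type :=
  {p : Finset (Fin m) × Finset (Fin m) // p.1 ∈ K.faces ∧ Disjoint p.1 p.2}

/-- cellular cochains of the real moment-angle complex -/
abbrev DSCochain (K : ASC m) : Type := DSIdx K →₀ ℤ

open Classical in
/-- the coboundary `d(u^σ t^τ) = ∑_{i ∈ τ, σ∪{i} ∈ K} (-1)^{(i,σ)} u^{σ∪{i}} t^{τ∖{i}}` -/
noncomputable def DScob (K : ASC m) : DSCochain K →ₗ[ℤ] DSCochain K :=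
  Finsupp.lift (DSCochain K) ℤ (DSIdx K) fun b =>
    ∑ i ∈ b.1.2,
      if h : insert i b.1.1 ∈ K.faces then
        csg i b.1.1 •
          Finsupp.single (⟨(insert i b.1.1, b.1.2.erase i),
            ⟨h, by
              refine Finset.disjoint_left.2 fun a ha hb => ?_
              rcases Finset.mem_insert.1 ha with h' | h'
              · exact (Finset.mem_erase.1 hb).1 h'
              · exact (Finset.disjoint_left.1 b.2.2 h') (Finset.mem_of_mem_erase hb)⟩⟩ :
              DSIdx K) (1 : ℤ)
      else 0

/-- cohomological degree of `u^σ t^τ` is `card σ`. -/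
def DSdeg {K : ASC m} (b : DSIdx K) : ℤ := b.1.1.card

/-- index of basis of `⊕_ω C̃^*(K_ω)` : pairs `(ω, σ)` with `σ ∈ K_ω`. -/
def PairIdx (K : ASC m) : Type :=
  {p : Finset (Fin m) × Finset (Fin m) // p.2 ⊆ p.1 ∧ p.2 ∈ K.faces}

abbrev PairCochain (K : ASC m) : Type := PairIdx K →₀ ℤ

open Classical in
/-- coboundary of the direct sum of augmented cochain complexes of full subcomplexes:
`d(σ*_ω) = ∑_{i ∈ ω∖σ, σ∪{i} ∈ K} (-1)^{(i,σ)} (σ∪{i})*_ω` -/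
noncomputable def Paircob (K : ASC m) : PairCochain K →ₗ[ℤ] PairCochain K :=
  Finsupp.lift (PairCochain K) ℤ (PairIdx K) fun b =>
    ∑ i ∈ (b.1.1 \ b.1.2).attach,
      if h : insert i.1 b.1.2 ∈ K.faces then
        csg i.1 b.1.2 •
          Finsupp.single (⟨(b.1.1, insert i.1 b.1.2),
            ⟨Finset.insert_subset (Finset.mem_sdiff.1 i.2).1 b.2.1, h⟩⟩ :
            PairIdx K) (1 : ℤ)
      else 0

/-- degree of the dual simplex `σ*_ω` is `card σ - 1`. -/
def Pairdeg {K : ASC m} (b : PairIdx K) : ℤ := (b.1.2.card : ℤ) - 1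

/-- the map `η` sending `σ*_ω ∈ C̃^*(K_ω)` to the word `u^σ t^{ω∖σ}` -/
noncomputable def etaMap (K : ASC m) : PairCochain K →ₗ[ℤ] DSCochain K :=
  Finsupp.lift (DSCochain K) ℤ (PairIdx K) fun b =>
    Finsupp.single (⟨(b.1.2, b.1.1 \ b.1.2), ⟨b.2.2, Finset.disjoint_sdiff⟩⟩ : DSIdx K) (1 : ℤ)

open Classical in
noncomputable def partSub {ι α : Type*} (f : ι → α) (a : α) : Submodule ℤ (ι →₀ ℤ) where
  carrier := {x | ∀ b ∈ x.support, f b = a}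
  add_mem' := by
    intro x y hx hy b hb
    rcases Finset.mem_union.1 (Finsupp.support_add hb) with h | h
    · exact hx b h
    · exact hy b h
  zero_mem' := by intro b hb; simp at hb
  smul_mem' := by
    intro c x hx b hb
    exact hx b (Finsupp.support_smul hb)

/-! A dual simplex `σ*_ω` is determined by the pair `(σ, ω)` with `σ ⊆ ω`, and a word
`u^σ t^τ` by the disjoint pair `(σ, τ)`; `(σ, ω) ↦ (σ, ω \ σ)` is a bijection between these
index sets, so `η` is a relabelling of bases. It raises `card σ - 1` to `card σ`, and it matches
the coboundaries term by term because both sum over `i ∈ ω \ σ` with the same sign `(-1)^{(i,σ)}`,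
the only check being `ω \ (σ ∪ {i}) = (ω \ σ) \ {i}`. -/

lemma Finsupp.lift_apply_single_one {X M : Type*} [AddCommMonoid M] [Module ℤ M] (f : X → M)
    (a : X) : Finsupp.lift M ℤ X f (Finsupp.single a 1) = f a := by
  simp [Finsupp.lift_apply]

lemma equivMapDomain_mem_partSub {ι κ α β : Type*} (e : ι ≃ κ) {f : ι → α} {g : κ → β} {φ : α → β}
    (h : ∀ b, g (e b) = φ (f b)) {a : α} {x : ι →₀ ℤ} (hx : x ∈ partSub f a) :
    Finsupp.equivMapDomain e x ∈ partSub g (φ a) := by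
  intro b hb
  have hb' : e.symm b ∈ x.support := by
    simpa [Finsupp.equivMapDomain_apply] using hb
  rw [← e.apply_symm_apply b, h, hx _ hb']

section

variable (K : ASC m)

noncomputable def pairIdxEquivDSIdx : PairIdx K ≃ DSIdx K where
  toFun b := ⟨(b.1.2, b.1.1 \ b.1.2), b.2.2, Finset.disjoint_sdiff⟩
  invFun b := ⟨(b.1.1 ∪ b.1.2, b.1.1), Finset.subset_union_left, b.2.1⟩
  left_inv b := Subtype.ext <| Prod.ext (Finset.union_sdiff_of_subset b.2.1) rfl
  right_inv b := Subtype.ext <| Prod.ext rfl (Finset.union_sdiff_cancel_left b.2.2)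

lemma etaMap_single (a : PairIdx K) :
    etaMap K (Finsupp.single a 1) =
      Finsupp.single (⟨(a.1.2, a.1.1 \ a.1.2), a.2.2, Finset.disjoint_sdiff⟩ : DSIdx K) 1 :=
  Finsupp.lift_apply_single_one _ _

lemma etaMap_eq_domLCongr :
    etaMap K = (Finsupp.domLCongr (pairIdxEquivDSIdx K)).toLinearMap :=
  Finsupp.lhom_ext' fun a => LinearMap.ext_ring <| by
    simp only [LinearMap.comp_apply, Finsupp.lsingle_apply, etaMap_single, LinearEquiv.coe_coe,
      Finsupp.domLCongr_single]
    rfl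

lemma etaMap_bijective : Function.Bijective (etaMap K) := by
  rw [etaMap_eq_domLCongr]
  exact (Finsupp.domLCongr _).bijective

lemma DSdeg_pairIdxEquivDSIdx (b : PairIdx K) :
    DSdeg (pairIdxEquivDSIdx K b) = Pairdeg b + 1 :=
  (sub_add_cancel _ _).symm

lemma etaMap_mem_partSub {p : ℤ} {x : PairCochain K} (hx : x ∈ partSub Pairdeg p) :
    etaMap K x ∈ partSub DSdeg (p + 1) := by
  rw [etaMap_eq_domLCongr]
  exact equivMapDomain_mem_partSub _ (φ := (· + 1)) (DSdeg_pairIdxEquivDSIdx K) hx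

open Classical in
lemma DScob_single (b : DSIdx K) :
    DScob K (Finsupp.single b 1) =
      ∑ i ∈ b.1.2,
        if h : insert i b.1.1 ∈ K.faces then
          csg i b.1.1 • Finsupp.single (⟨(insert i b.1.1, b.1.2.erase i), h,
            Finset.disjoint_insert_left.2 ⟨Finset.notMem_erase i _,
              Finset.disjoint_of_subset_right (Finset.erase_subset i _) b.2.2⟩⟩ : DSIdx K) 1
        else 0 :=
  Finsupp.lift_apply_single_one _ _

open Classical in
lemma Paircob_single (a : PairIdx K) :
    Paircob K (Finsupp.single a 1) =
      ∑ i ∈ (a.1.1 \ a.1.2).attach,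
        if h : insert i.1 a.1.2 ∈ K.faces then
          csg i.1 a.1.2 • Finsupp.single (⟨(a.1.1, insert i.1 a.1.2),
            Finset.insert_subset (Finset.mem_sdiff.1 i.2).1 a.2.1, h⟩ : PairIdx K) 1
        else 0 :=
  Finsupp.lift_apply_single_one _ _

lemma etaMap_comp_Paircob : (etaMap K).comp (Paircob K) = (DScob K).comp (etaMap K) := by
  refine Finsupp.lhom_ext' fun a => LinearMap.ext_ring ?_
  simp only [LinearMap.comp_apply, Finsupp.lsingle_apply]
  rw [Paircob_single, etaMap_single]
  refine (map_sum (etaMap K) _ _).trans <| .trans ?_ (DScob_single K _).symm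
  rw [← Finset.sum_attach (a.1.1 \ a.1.2)]
  refine Finset.sum_congr rfl fun i _ => ?_
  by_cases hc : insert i.1 a.1.2 ∈ K.faces
  · rw [dif_pos hc, dif_pos hc]
    refine (map_smul (etaMap K) _ _).trans <| congrArg (csg i.1 a.1.2 • ·) <|
      (etaMap_single K _).trans <| congrArg (Finsupp.single · 1) ?_
    exact Subtype.ext <| Prod.ext rfl (Finset.sdiff_insert a.1.1 a.1.2 i.1)
  · rw [dif_neg hc, dif_neg hc]
    exact map_zero _

end

theorem stmt4 (K : ASC m) :
    Function.Bijective (etaMap K) ∧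
    (∀ x : PairCochain K, etaMap K (Paircob K x) = DScob K (etaMap K x)) ∧
    (∀ (p : ℤ) (x : PairCochain K), x ∈ partSub Pairdeg p →
      etaMap K x ∈ partSub DSdeg (p + 1)) :=
  ⟨etaMap_bijective K, LinearMap.congr_fun (etaMap_comp_Paircob K),
    fun _ _ => etaMap_mem_partSub K⟩
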